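/- Let t ≥ 1, let H be an m × w matrix over ZMod 2 with H.mulVec v ≠ 0 for every nonzero v : Fin w → ZMod 2 with wt(v) ≤ 2t (a parity-check matrix of distance at least 2t+1), and let F be the (2t+1)-fold stack of H. In the ideal flagged extraction circuit for a weight-(w+1) stabilizer with flag matrix F, any two error configurations (e₁ₛ, e₁f) and (e₂ₛ, e₂f), each of total weight at most t, that produce the same observed flag pattern satisfy: the restrictions of e₁ₛ and e₂ₛ to the interior locations 1, …, w coincide, and consequently dat(e₁ₛ) + dat(e₂ₛ) ∈ {0, 𝟙}; that is, the two errors propagate to the data identically up to the full stabilizer. -/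

import Mathlib

/-- The `r`-fold stack of an `m × w` matrix `H` over `ZMod 2`. -/
def stackMatrix (r m w : ℕ) (H : Matrix (Fin m) (Fin w) (ZMod 2)) :
    Matrix (Fin r × Fin m) (Fin w) (ZMod 2) :=
  fun p j => H p.2 j

/-- Flag pattern of syndrome-error location `p` in the ideal flagged extraction circuit
with flag matrix the stack of `H`: column `p` of the stack for `1 ≤ p ≤ w`, and `0` for
the boundary locations `p = 0` and `p = w + 1`. -/
def idealPat (r m w : ℕ) (H : Matrix (Fin m) (Fin w) (ZMod 2)) (p : Fin (w + 2)) :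
    Fin r × Fin m → ZMod 2 :=
  if h : 1 ≤ (p : ℕ) ∧ (p : ℕ) ≤ w then
    fun q => stackMatrix r m w H q ⟨(p : ℕ) - 1, by omega⟩
  else 0

/-- Data propagation of syndrome-error location `p`: the indicator vector of
`{p, …, w} ⊆ Fin (w+1)`. -/
def idealDat (w : ℕ) (p : Fin (w + 2)) : Fin (w + 1) → ZMod 2 :=
  fun j => if (p : ℕ) ≤ (j : ℕ) then 1 else 0

/-- Linear extension of `idealPat` to syndrome-error vectors. -/
def idealPatV (r m w : ℕ) (H : Matrix (Fin m) (Fin w) (ZMod 2))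
    (e_s : Fin (w + 2) → ZMod 2) : Fin r × Fin m → ZMod 2 :=
  ∑ p, e_s p • idealPat r m w H p

/-- Linear extension of `idealDat` to syndrome-error vectors. -/
def idealDatV (w : ℕ) (e_s : Fin (w + 2) → ZMod 2) : Fin (w + 1) → ZMod 2 :=
  ∑ p, e_s p • idealDat w p

/-!
Summing the two configurations, the interior difference `v` of the syndrome errors satisfies
`F v = e₁f + e₂f`, and since `F` repeats `H` `2t+1` times, a nonzero `H v` would give the flag
errors total weight at least `2t+1`, while they have at most `2t`. So `H v = 0`, and as `wt v ≤ 2t` the distance of `H`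
forces `v = 0`. Only the boundary locations `0` and `w+1` remain, which propagate to the data
as `𝟙` and `0`.
-/

open Finset Matrix

section Hamming

variable {ι κ R : Type*} [Fintype ι] [Fintype κ]

lemma hammingNorm_sub_le [AddGroup R] [DecidableEq R] (x y : ι → R) :
    hammingNorm (x - y) ≤ hammingNorm x + hammingNorm y := by
  calc hammingNorm (x - y)
      _ = hammingDist x y := by simp only [hammingNorm, hammingDist, Pi.sub_apply, sub_ne_zero]
      _ ≤ hammingDist x 0 + hammingDist 0 y := hammingDist_triangle x 0 y
      _ = hammingNorm x + hammingNorm y := by rw [hammingDist_zero_right, hammingDist_zero_left]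

lemma hammingNorm_comp_le_of_injective [Zero R] [DecidableEq R] {f : κ → ι}
    (hf : Function.Injective f) (x : ι → R) : hammingNorm (x ∘ f) ≤ hammingNorm x :=
  card_le_card_of_injOn f (fun j hj => by simpa using hj) hf.injOn

lemma hammingNorm_replicate [Zero R] [DecidableEq R] (x : ι → R) :
    hammingNorm (fun q : κ × ι => x q.2) = Fintype.card κ * hammingNorm x := by
  unfold hammingNorm
  rw [← card_univ, ← card_product, ← univ_product_univ, ← filter_product_right]

end Hamming

def restrictInterior {w : ℕ} (e : Fin (w + 2) → ZMod 2) : Fin w → ZMod 2 :=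
  fun j => e j.castSucc.succ

lemma hammingNorm_restrictInterior_le {w : ℕ} (e : Fin (w + 2) → ZMod 2) :
    hammingNorm (restrictInterior e) ≤ hammingNorm e :=
  hammingNorm_comp_le_of_injective ((Fin.succ_injective _).comp (Fin.castSucc_injective _)) e

section Locations

variable {r m w : ℕ} (H : Matrix (Fin m) (Fin w) (ZMod 2))

lemma idealPat_zero : idealPat r m w H 0 = 0 := dif_neg (by simp)

lemma idealPat_last : idealPat r m w H (Fin.last (w + 1)) = 0 := dif_neg (by simp)

lemma idealPat_interior (j : Fin w) :
    idealPat r m w H j.castSucc.succ = fun q => H q.2 j :=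
  dif_pos (by simp [Nat.succ_le_of_lt j.isLt])

lemma idealDat_zero : idealDat w 0 = 1 := by
  ext k
  simp [idealDat]

lemma idealDat_last : idealDat w (Fin.last (w + 1)) = 0 := by
  ext k
  simp [idealDat, Nat.lt_succ_iff.mp k.isLt]

end Locations

lemma idealPatV_apply (r m w : ℕ) (H : Matrix (Fin m) (Fin w) (ZMod 2))
    (e : Fin (w + 2) → ZMod 2) (q : Fin r × Fin m) :
    idealPatV r m w H e q = (H *ᵥ restrictInterior e) q.2 := by
  simp [idealPatV, Fin.sum_univ_succ (n := w + 1), Fin.sum_univ_castSucc, Fin.succ_last,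
    idealPat_zero, idealPat_last, idealPat_interior, mulVec, dotProduct, restrictInterior,
    mul_comm]

lemma idealDatV_add (w : ℕ) (e e' : Fin (w + 2) → ZMod 2) :
    idealDatV w (e + e') = idealDatV w e + idealDatV w e' := by
  simp only [idealDatV, Pi.add_apply, add_smul, sum_add_distrib]

lemma idealDatV_of_restrictInterior_eq_zero {w : ℕ} {e : Fin (w + 2) → ZMod 2}
    (he : restrictInterior e = 0) : idealDatV w e = fun _ => e 0 := by
  have he' (j : Fin w) : e j.castSucc.succ = 0 := congrFun he j
  ext k
  simp [idealDatV, Fin.sum_univ_succ (n := w + 1), Fin.sum_univ_castSucc, Fin.succ_last,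
    idealDat_zero, idealDat_last, he']

lemma restrictInterior_eq_of_idealPatV_add_eq {r m w d : ℕ}
    {H : Matrix (Fin m) (Fin w) (ZMod 2)}
    (hH : ∀ v : Fin w → ZMod 2, v ≠ 0 → hammingNorm v ≤ d → H *ᵥ v ≠ 0)
    {e₁s e₂s : Fin (w + 2) → ZMod 2} {e₁f e₂f : Fin r × Fin m → ZMod 2}
    (hs : hammingNorm (restrictInterior e₁s) + hammingNorm (restrictInterior e₂s) ≤ d)
    (hf : hammingNorm e₁f + hammingNorm e₂f < r)
    (hsame : idealPatV r m w H e₁s + e₁f = idealPatV r m w H e₂s + e₂f) :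
    restrictInterior e₁s = restrictInterior e₂s := by
  set v := restrictInterior e₁s - restrictInterior e₂s
  have hflags : (fun q : Fin r × Fin m => (H *ᵥ v) q.2) = e₂f - e₁f := by
    ext q
    have := congrFun hsame q
    simp only [Pi.add_apply, idealPatV_apply] at this
    simp only [v, mulVec_sub, Pi.sub_apply]
    linear_combination this
  have hHv : H *ᵥ v = 0 := by
    by_contra hHv
    have hweight := hammingNorm_sub_le e₂f e₁f
    rw [← hflags, hammingNorm_replicate, Fintype.card_fin] at hweight
    have := Nat.le_mul_of_pos_right r (hammingNorm_pos_iff.mpr hHv)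
    omega
  by_contra hne
  exact hH v (sub_ne_zero.mpr hne) ((hammingNorm_sub_le _ _).trans hs) hHv

theorem ideal_distance_d_flag_gadget_general (t m w : ℕ)
    (H : Matrix (Fin m) (Fin w) (ZMod 2))
    (hH : ∀ v : Fin w → ZMod 2, v ≠ 0 → hammingNorm v ≤ 2 * t → H.mulVec v ≠ 0)
    (e₁s e₂s : Fin (w + 2) → ZMod 2) (e₁f e₂f : Fin (2 * t + 1) × Fin m → ZMod 2)
    (h₁ : hammingNorm e₁s + hammingNorm e₁f ≤ t)
    (h₂ : hammingNorm e₂s + hammingNorm e₂f ≤ t)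
    (hsame : idealPatV (2 * t + 1) m w H e₁s + e₁f
           = idealPatV (2 * t + 1) m w H e₂s + e₂f) :
    (∀ p : Fin (w + 2), 1 ≤ (p : ℕ) → (p : ℕ) ≤ w → e₁s p = e₂s p) ∧
      (idealDatV w e₁s + idealDatV w e₂s = 0 ∨
        idealDatV w e₁s + idealDatV w e₂s = fun _ => 1) := by
  have hv : restrictInterior e₁s = restrictInterior e₂s :=
    restrictInterior_eq_of_idealPatV_add_eq hH
      (by linarith [hammingNorm_restrictInterior_le e₁s, hammingNorm_restrictInterior_le e₂s]) (by omega) hsame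
  refine ⟨fun p hp₁ hpw => ?_, ?_⟩
  · obtain ⟨j, rfl⟩ : ∃ j : Fin w, j.castSucc.succ = p :=
      ⟨⟨p - 1, by omega⟩, Fin.ext (by simp; omega)⟩
    exact congrFun hv j
  · have hsum : restrictInterior (e₁s + e₂s) = 0 := by
      ext j
      have hj : e₁s j.castSucc.succ = e₂s j.castSucc.succ := congrFun hv j
      simp only [restrictInterior, Pi.add_apply, Pi.zero_apply, hj, CharTwo.add_self_eq_zero]
    rw [← idealDatV_add, idealDatV_of_restrictInterior_eq_zero hsum]
    have hcases : ∀ a : ZMod 2, a = 0 ∨ a = 1 := by decide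
    rcases hcases ((e₁s + e₂s) 0) with h | h
    · exact .inl (by rw [h]; rfl)
    · exact .inr (by rw [h])

/-- with `H` a parity-check matrix of distance at least `2t+1` and `F` its
`(2t+1)`-fold stack, any two error configurations of total weight at most `t` producing
the same observed flag pattern agree on the interior locations `1, …, w`, and consequently
propagate to the data identically up to the full stabilizer (the all-ones vector). -/
theorem ideal_distance_d_flag_gadget (t m w : ℕ) (ht : 1 ≤ t)
    (H : Matrix (Fin m) (Fin w) (ZMod 2))
    (hH : ∀ v : Fin w → ZMod 2, v ≠ 0 → hammingNorm v ≤ 2 * t → H.mulVec v ≠ 0)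
    (e₁s e₂s : Fin (w + 2) → ZMod 2) (e₁f e₂f : Fin (2 * t + 1) × Fin m → ZMod 2)
    (h₁ : hammingNorm e₁s + hammingNorm e₁f ≤ t)
    (h₂ : hammingNorm e₂s + hammingNorm e₂f ≤ t)
    (hsame : idealPatV (2 * t + 1) m w H e₁s + e₁f
           = idealPatV (2 * t + 1) m w H e₂s + e₂f) :
    (∀ p : Fin (w + 2), 1 ≤ (p : ℕ) → (p : ℕ) ≤ w → e₁s p = e₂s p) ∧
      (idealDatV w e₁s + idealDatV w e₂s = 0 ∨
        idealDatV w e₁s + idealDatV w e₂s = fun _ => 1) :=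
  ideal_distance_d_flag_gadget_general t m w H hH e₁s e₂s e₁f e₂f h₁ h₂ hsame
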